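/- arXiv:1704.06640 — 3 statements merged into one kernel-verified Lean document; each statement's English description precedes it below -/
import Mathlib

section
/- Let g_sr and g_rr be independent real random variables on a probability space, with g_sr ~ Gamma(m_sr, θ_sr) and g_rr ~ Gamma(m_rr, θ_rr) for integers m_sr, m_rr ≥ 1 and scales θ_sr, θ_rr > 0. Fix P_s, P_r > 0, C ∈ [0,1], r > 0, set γ = 2^{2r} − 1 and ψ = Ψ_γ(C). Then P[(P_s·g_sr + P_r·g_rr + 1)² − (P_r·g_rr·C)² < 2^{2r}·((P_r·g_rr + 1)² − (P_r·g_rr·C)²)] ≥ 1 − (e^{−ψ/(P_s·θ_sr)} / (Γ(m_rr)·θ_rr^{m_rr})) · Σ_{m=0}^{m_sr−1} Σ_{k=0}^{m} binom(m,k) · P_r^k · Γ(k + m_rr) · (ψ/(P_s·θ_sr))^m / ( m! · (P_r·ψ/(P_s·θ_sr) + 1/θ_rr)^{k + m_rr} ). -/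
open MeasureTheory ProbabilityTheory Real Finset

/-- `Psi γ x = √(1 + γ(1 - x²)) - 1`. -/
noncomputable def Psi (γ x : ℝ) : ℝ := Real.sqrt (1 + γ * (1 - x ^ 2)) - 1

/-- The Gamma(m, θ) law (integer shape `m ≥ 1`, scale `θ > 0`), given by its density
`x^(m-1) e^(-x/θ) / ((m-1)! θ^m)` on `[0, ∞)`. -/
noncomputable def gammaLaw (m : ℕ) (θ : ℝ) : Measure ℝ :=
  volume.withDensity fun x =>
    ENNReal.ofReal
      (if 0 ≤ x then x ^ (m - 1) * Real.exp (-x / θ) / ((Nat.factorial (m - 1) : ℝ) * θ ^ m)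
       else 0)

/-!
If `P_s g_sr < ψ (P_r g_rr + 1)` then, since `(1 + ψ)² = 1 + γ (1 - C²)`, squaring gives
`(P_s g_sr + P_r g_rr + 1)² < (1 + γ (1 - C²)) (P_r g_rr + 1)²`, which is at most the right-hand
side of the event by `γ C² (2 P_r g_rr + 1) ≥ 0`. So the probability is at least
`1 - P(g_sr ≥ (ψ / P_s) (P_r g_rr + 1))`, and this last probability is computed exactly:
conditionally on `g_rr = y` it is the Erlang tail `e^{-u} ∑_{j < m_sr} u^j / j!` at
`u = L (P_r y + 1)`, `L = ψ / (P_s θ_sr)`; expanding `(P_r y + 1)^j` binomially and integrating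
against the Gamma density with `∫₀^∞ y^p e^{-β y} dy = p! / β^(p+1)` gives the double sum.
-/

open Set Filter Topology
open scoped Nat

/-- `erlangTail m (t / θ)` is the tail `P(G ≥ t)` of `G ~ Gamma(m, θ)`. -/
noncomputable def erlangTail (m : ℕ) (u : ℝ) : ℝ := exp (-u) * ∑ j ∈ range m, u ^ j / j !

lemma erlangTail_succ (n : ℕ) :
    erlangTail (n + 1) = fun u => erlangTail n u + exp (-u) * u ^ n / n ! := by
  ext u
  rw [erlangTail, erlangTail, sum_range_succ, mul_add, mul_div_assoc]

lemma hasDerivAt_erlangTail_succ (n : ℕ) (u : ℝ) :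
    HasDerivAt (erlangTail (n + 1)) (-(exp (-u) * u ^ n / n !)) u := by
  induction n with
  | zero =>
    rw [erlangTail_succ]
    simpa [erlangTail] using (hasDerivAt_neg u).exp
  | succ n ih =>
    have hterm : HasDerivAt (fun u => exp (-u) * u ^ (n + 1) / (n + 1)!)
        ((-exp (-u) * u ^ (n + 1) + exp (-u) * ((n + 1 : ℕ) * u ^ n)) / (n + 1)!) u := by
      simpa using ((hasDerivAt_neg u).exp.mul (hasDerivAt_pow (n + 1) u)).div_const
        ((n + 1)! : ℝ)
    rw [erlangTail_succ (n + 1)]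
    refine (ih.add hterm).congr_deriv ?_
    rw [Nat.factorial_succ]
    push_cast
    field_simp
    ring

lemma tendsto_erlangTail_atTop (m : ℕ) : Tendsto (erlangTail m) atTop (𝓝 0) := by
  have h := tendsto_finsetSum (range m) fun j _ =>
    (tendsto_pow_mul_exp_neg_atTop_nhds_zero j).div_const (j ! : ℝ)
  simp only [zero_div, sum_const_zero] at h
  refine h.congr fun u => ?_
  rw [erlangTail, mul_sum]
  exact sum_congr rfl fun j _ => by ring

noncomputable def gammaDensity (m : ℕ) (θ x : ℝ) : ℝ :=
  x ^ (m - 1) * exp (-x / θ) / ((m - 1)! * θ ^ m)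

lemma gammaDensity_nonneg (m : ℕ) {θ x : ℝ} (hθ : 0 < θ) (hx : 0 ≤ x) :
    0 ≤ gammaDensity m θ x := by
  unfold gammaDensity; positivity

lemma hasDerivAt_neg_erlangTail_div (n : ℕ) {θ : ℝ} (hθ : θ ≠ 0) (x : ℝ) :
    HasDerivAt (fun x => -erlangTail (n + 1) (x / θ)) (gammaDensity (n + 1) θ x) x := by
  refine ((hasDerivAt_erlangTail_succ n (x / θ)).comp x
    ((hasDerivAt_id x).div_const θ)).neg.congr_deriv ?_
  simp only [gammaDensity, Nat.add_sub_cancel, neg_div, div_pow]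
  field_simp
  ring

lemma gammaLaw_eq_withDensity (m : ℕ) (θ : ℝ) :
    gammaLaw m θ = (volume.restrict (Ioi 0)).withDensity
      fun x => ENNReal.ofReal (gammaDensity m θ x) := by
  rw [restrict_Ioi_eq_restrict_Ici, ← withDensity_indicator measurableSet_Ici, gammaLaw]
  congr 1
  ext x
  by_cases hx : 0 ≤ x <;> simp [hx, gammaDensity]

lemma ae_pos_gammaLaw (m : ℕ) (θ : ℝ) : ∀ᵐ x ∂gammaLaw m θ, 0 < x := by
  rw [gammaLaw_eq_withDensity]
  exact (withDensity_absolutelyContinuous _ _).ae_le (ae_restrict_mem measurableSet_Ioi)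

lemma gammaLaw_Ici {m : ℕ} (hm : 1 ≤ m) {θ t : ℝ} (hθ : 0 < θ) (ht : 0 ≤ t) :
    gammaLaw m θ (Ici t) = ENNReal.ofReal (erlangTail m (t / θ)) := by
  obtain ⟨n, rfl⟩ := Nat.exists_eq_add_of_le' hm
  have hderiv : ∀ x ∈ Ici t, HasDerivAt (fun x => -erlangTail (n + 1) (x / θ))
      (gammaDensity (n + 1) θ x) x := fun x _ => hasDerivAt_neg_erlangTail_div n hθ.ne' x
  have hnonneg : ∀ x ∈ Ioi t, 0 ≤ gammaDensity (n + 1) θ x :=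
    fun x hx => gammaDensity_nonneg _ hθ (ht.trans hx.le)
  have hlim : Tendsto (fun x => -erlangTail (n + 1) (x / θ)) atTop (𝓝 0) := by
    simpa using ((tendsto_erlangTail_atTop (n + 1)).comp
      (tendsto_id.atTop_div_const hθ)).neg
  have hval : ∫ x in Ioi t, gammaDensity (n + 1) θ x = erlangTail (n + 1) (t / θ) := by
    rw [integral_Ioi_of_hasDerivAt_of_nonneg' hderiv hnonneg hlim]
    ring
  rw [gammaLaw_eq_withDensity, ← measure_congr Ioi_ae_eq_Ici,
    withDensity_apply _ measurableSet_Ioi, Measure.restrict_restrict measurableSet_Ioi,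
    inter_eq_left.2 (Ioi_subset_Ioi ht), ← hval, ofReal_integral_eq_lintegral_ofReal
      (integrableOn_Ioi_deriv_of_nonneg' hderiv hnonneg hlim)]
  exact (ae_restrict_iff' measurableSet_Ioi).2 (ae_of_all _ hnonneg)

lemma lintegral_ofReal_gammaLaw {m : ℕ} {θ : ℝ} (hθ : 0 < θ) {f : ℝ → ℝ} (hf : Measurable f)
    (hf_nonneg : ∀ x, 0 < x → 0 ≤ f x)
    (hint : IntegrableOn (fun x => gammaDensity m θ x * f x) (Ioi 0)) :
    ∫⁻ x, ENNReal.ofReal (f x) ∂gammaLaw m θ =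
      ENNReal.ofReal (∫ x in Ioi 0, gammaDensity m θ x * f x) := by
  rw [gammaLaw_eq_withDensity, lintegral_withDensity_eq_lintegral_mul _
    (by unfold gammaDensity; fun_prop) hf.ennreal_ofReal, ofReal_integral_eq_lintegral_ofReal hint]
  · refine setLIntegral_congr_fun measurableSet_Ioi fun x hx => ?_
    rw [Pi.mul_apply, ENNReal.ofReal_mul (gammaDensity_nonneg m hθ (le_of_lt hx))]
  · exact (ae_restrict_iff' measurableSet_Ioi).2 (ae_of_all _ fun x hx =>
      mul_nonneg (gammaDensity_nonneg m hθ (le_of_lt hx)) (hf_nonneg x hx))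

lemma integral_pow_mul_exp_neg_mul_Ioi (k : ℕ) {β : ℝ} (hβ : 0 < β) :
    ∫ y in Ioi 0, y ^ k * exp (-(β * y)) = k ! / β ^ (k + 1) := by
  have key := integral_rpow_mul_exp_neg_mul_Ioi (by positivity : (0 : ℝ) < k + 1) hβ
  simp only [add_sub_cancel_right, rpow_natCast] at key
  rw [key, Gamma_nat_eq_factorial, ← Nat.cast_succ, rpow_natCast, div_pow, one_pow]
  field_simp

lemma integrableOn_pow_mul_exp_neg_mul_Ioi (k : ℕ) {β : ℝ} (hβ : 0 < β) :
    IntegrableOn (fun y => y ^ k * exp (-(β * y))) (Ioi 0) :=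
  .of_integral_ne_zero (by rw [integral_pow_mul_exp_neg_mul_Ioi k hβ]; positivity)

lemma gammaDensity_mul_erlangTail (n m : ℕ) (θ c L y : ℝ) :
    gammaDensity (n + 1) θ y * erlangTail m (L * (c * y + 1)) =
      ∑ j ∈ range m, ∑ k ∈ range (j + 1),
        exp (-L) * j.choose k * c ^ k * L ^ j / (j ! * (n ! * θ ^ (n + 1))) *
          (y ^ (k + n) * exp (-((c * L + 1 / θ) * y))) := by
  have hexp : exp (-y / θ) * exp (-(L * (c * y + 1))) =
      exp (-L) * exp (-((c * L + 1 / θ) * y)) := by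
    rw [← exp_add, ← exp_add]
    ring_nf
  simp only [gammaDensity, erlangTail, Nat.add_sub_cancel, mul_sum]
  refine sum_congr rfl fun j _ => ?_
  rw [mul_pow, add_pow]
  simp only [one_pow, mul_one, mul_sum, sum_div]
  refine sum_congr rfl fun k _ => ?_
  linear_combination (y ^ n * (c * y) ^ k * L ^ j * (j.choose k : ℝ) /
    (j ! * (n ! * θ ^ (n + 1)))) * hexp

lemma lintegral_erlangTail_gammaLaw {n : ℕ} (hn : 1 ≤ n) (m : ℕ) {θ c L : ℝ} (hθ : 0 < θ)
    (hc : 0 ≤ c) (hL : 0 ≤ L) :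
    ∫⁻ y, ENNReal.ofReal (erlangTail m (L * (c * y + 1))) ∂gammaLaw n θ =
      ENNReal.ofReal (exp (-L) / (Gamma n * θ ^ n) *
        ∑ j ∈ range m, ∑ k ∈ range (j + 1),
          j.choose k * c ^ k * Gamma (k + n) * L ^ j / (j ! * (c * L + 1 / θ) ^ (k + n))) := by
  obtain ⟨n, rfl⟩ := Nat.exists_eq_add_of_le' hn
  have hβ : 0 < c * L + 1 / θ := by positivity
  have hint : ∀ j k, IntegrableOn (fun y =>
      exp (-L) * j.choose k * c ^ k * L ^ j / (j ! * (n ! * θ ^ (n + 1))) *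
        (y ^ (k + n) * exp (-((c * L + 1 / θ) * y)))) (Ioi 0) :=
    fun j k => (integrableOn_pow_mul_exp_neg_mul_Ioi (k + n) hβ).const_mul _
  rw [lintegral_ofReal_gammaLaw hθ (by unfold erlangTail; fun_prop)
    (fun y hy => by unfold erlangTail; positivity)]
  · simp only [gammaDensity_mul_erlangTail]
    rw [integral_finsetSum _ fun j _ => integrable_finsetSum _ fun k _ => hint j k, mul_sum]
    congr 1
    refine sum_congr rfl fun j _ => ?_
    rw [integral_finsetSum _ fun k _ => hint j k, mul_sum]
    refine sum_congr rfl fun k _ => ?_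
    rw [integral_const_mul, integral_pow_mul_exp_neg_mul_Ioi (k + n) hβ,
      show (k : ℝ) + (n + 1 : ℕ) = (k + n : ℕ) + 1 by push_cast; ring, Nat.cast_succ,
      Gamma_nat_eq_factorial, Gamma_nat_eq_factorial]
    field_simp
    ring
  · simp only [gammaDensity_mul_erlangTail]
    exact integrable_finsetSum _ fun j _ => integrable_finsetSum _ fun k _ => hint j k

lemma ProbabilityTheory.IndepFun.measure_le_eq_lintegral {Ω β : Type*} [MeasurableSpace Ω]
    [MeasurableSpace β] {μ : Measure Ω} [IsFiniteMeasure μ] {X : Ω → ℝ} {Y : Ω → β}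
    (hXY : IndepFun X Y μ) (hX : Measurable X) (hY : Measurable Y) {f : β → ℝ} (hf : Measurable f) :
    μ {ω | f (Y ω) ≤ X ω} = ∫⁻ y, μ.map X (Ici (f y)) ∂μ.map Y := by
  have hS : MeasurableSet {p : ℝ × β | f p.2 ≤ p.1} :=
    measurableSet_le (by fun_prop) (by fun_prop)
  calc μ {ω | f (Y ω) ≤ X ω} = μ.map (fun ω => (X ω, Y ω)) {p | f p.2 ≤ p.1} := by
        rw [Measure.map_apply (hX.prodMk hY) hS]; rfl
    _ = ((μ.map X).prod (μ.map Y)) {p | f p.2 ≤ p.1} := by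
        rw [(indepFun_iff_map_prod_eq_prod_map_map hX.aemeasurable hY.aemeasurable).1 hXY]
    _ = ∫⁻ y, μ.map X (Ici (f y)) ∂μ.map Y := by rw [Measure.prod_apply_symm hS]; rfl

lemma measureReal_mul_add_one_le_of_gammaLaw {Ω : Type*} [MeasurableSpace Ω] {μ : Measure Ω}
    [IsProbabilityMeasure μ] {X Y : Ω → ℝ} (hXY : IndepFun X Y μ)
    (hX : Measurable X) (hY : Measurable Y) {mX mY : ℕ} (hmX : 1 ≤ mX) (hmY : 1 ≤ mY)
    {θX θY : ℝ} (hθX : 0 < θX) (hθY : 0 < θY)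
    (hlawX : μ.map X = gammaLaw mX θX) (hlawY : μ.map Y = gammaLaw mY θY)
    {s c : ℝ} (hs : 0 ≤ s) (hc : 0 ≤ c) :
    μ.real {ω | s * (c * Y ω + 1) ≤ X ω} =
      exp (-(s / θX)) / (Gamma mY * θY ^ mY) *
        ∑ j ∈ range mX, ∑ k ∈ range (j + 1),
          j.choose k * c ^ k * Gamma (k + mY) * (s / θX) ^ j /
            (j ! * (c * (s / θX) + 1 / θY) ^ (k + mY)) := by
  have hL : 0 ≤ s / θX := div_nonneg hs hθX.le
  have htail : ∫⁻ y, gammaLaw mX θX (Ici (s * (c * y + 1))) ∂gammaLaw mY θY =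
      ∫⁻ y, ENNReal.ofReal (erlangTail mX (s / θX * (c * y + 1))) ∂gammaLaw mY θY := by
    refine lintegral_congr_ae ?_
    filter_upwards [ae_pos_gammaLaw mY θY] with y hy
    rw [gammaLaw_Ici hmX hθX (by positivity), div_mul_eq_mul_div]
  rw [measureReal_def, hXY.measure_le_eq_lintegral hX hY (f := fun y => s * (c * y + 1))
    (by fun_prop), hlawX, hlawY, htail, lintegral_erlangTail_gammaLaw hmY mX hθY hc hL,
    ENNReal.toReal_ofReal]
  refine mul_nonneg (by positivity) (sum_nonneg fun j _ => sum_nonneg fun k _ => ?_)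
  exact div_nonneg (mul_nonneg (mul_nonneg (mul_nonneg (Nat.cast_nonneg _) (pow_nonneg hc k))
    (Gamma_nonneg_of_nonneg (by positivity))) (pow_nonneg hL j)) (by positivity)

lemma Psi_nonneg {γ C : ℝ} (hγ : 0 ≤ γ) (hC : C ^ 2 ≤ 1) : 0 ≤ Psi γ C := by
  rw [Psi, sub_nonneg, one_le_sqrt]
  nlinarith

lemma one_add_Psi_sq {γ C : ℝ} (hγ : 0 ≤ γ) (hC : C ^ 2 ≤ 1) :
    (1 + Psi γ C) ^ 2 = 1 + γ * (1 - C ^ 2) := by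
  rw [Psi, add_sub_cancel, sq_sqrt]
  nlinarith

lemma add_sq_sub_sq_lt_of_lt_Psi {a b γ C : ℝ} (ha : 0 ≤ a) (hb : 0 ≤ b) (hγ : 0 ≤ γ)
    (hC : C ^ 2 ≤ 1) (h : a < Psi γ C * (b + 1)) :
    (a + b + 1) ^ 2 - (b * C) ^ 2 < (1 + γ) * ((b + 1) ^ 2 - (b * C) ^ 2) := by
  have hlt : (a + b + 1) ^ 2 < (1 + γ * (1 - C ^ 2)) * (b + 1) ^ 2 := by
    rw [← one_add_Psi_sq hγ hC, ← mul_pow]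
    exact pow_lt_pow_left₀ (by linarith) (by positivity) two_ne_zero
  nlinarith [mul_nonneg (mul_nonneg hγ (sq_nonneg C)) (by linarith : 0 ≤ 2 * b + 1)]

theorem stmt_1
    {Ω : Type*} [MeasurableSpace Ω] (μ : Measure Ω) [IsProbabilityMeasure μ]
    (g_sr g_rr : Ω → ℝ) (hg_sr : Measurable g_sr) (hg_rr : Measurable g_rr)
    (hindep : IndepFun g_sr g_rr μ)
    (m_sr m_rr : ℕ) (hm_sr : 1 ≤ m_sr) (hm_rr : 1 ≤ m_rr)
    (θ_sr θ_rr : ℝ) (hθ_sr : 0 < θ_sr) (hθ_rr : 0 < θ_rr)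
    (hlaw_sr : μ.map g_sr = gammaLaw m_sr θ_sr)
    (hlaw_rr : μ.map g_rr = gammaLaw m_rr θ_rr)
    (P_s P_r : ℝ) (hP_s : 0 < P_s) (hP_r : 0 < P_r)
    (C : ℝ) (hC : C ∈ Set.Icc (0 : ℝ) 1)
    (r : ℝ) (hr : 0 < r)
    (γ ψ : ℝ) (hγ : γ = (2 : ℝ) ^ (2 * r) - 1) (hψ : ψ = Psi γ C) :
    (μ {ω | (P_s * g_sr ω + P_r * g_rr ω + 1) ^ 2 - (P_r * g_rr ω * C) ^ 2
          < (2 : ℝ) ^ (2 * r) * ((P_r * g_rr ω + 1) ^ 2 - (P_r * g_rr ω * C) ^ 2)}).toReal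
      ≥ 1 - (Real.exp (-ψ / (P_s * θ_sr)) / (Real.Gamma (m_rr : ℝ) * θ_rr ^ m_rr)) *
          ∑ m ∈ range m_sr, ∑ k ∈ range (m + 1),
            (m.choose k : ℝ) * P_r ^ k * Real.Gamma ((k : ℝ) + m_rr) *
              (ψ / (P_s * θ_sr)) ^ m /
              ((Nat.factorial m : ℝ) *
                (P_r * ψ / (P_s * θ_sr) + 1 / θ_rr) ^ (k + m_rr)) := by
  have hγ0 : 0 ≤ γ := by rw [hγ, sub_nonneg]; exact one_le_rpow one_le_two (by positivity)
  have hC2 : C ^ 2 ≤ 1 := by nlinarith [hC.1, hC.2]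
  have hψ0 : 0 ≤ ψ := hψ ▸ Psi_nonneg hγ0 hC2
  set N := {ω | ψ / P_s * (P_r * g_rr ω + 1) ≤ g_sr ω}
  have hNc : Nᶜ ≤ᵐ[μ] {ω | (P_s * g_sr ω + P_r * g_rr ω + 1) ^ 2 - (P_r * g_rr ω * C) ^ 2
      < (2 : ℝ) ^ (2 * r) * ((P_r * g_rr ω + 1) ^ 2 - (P_r * g_rr ω * C) ^ 2)} := by
    filter_upwards [ae_of_ae_map hg_sr.aemeasurable (hlaw_sr ▸ ae_pos_gammaLaw m_sr θ_sr),
      ae_of_ae_map hg_rr.aemeasurable (hlaw_rr ▸ ae_pos_gammaLaw m_rr θ_rr)] with ω hx hy hω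
    have hlt : P_s * g_sr ω < ψ * (P_r * g_rr ω + 1) := by
      have : g_sr ω < ψ / P_s * (P_r * g_rr ω + 1) := not_le.1 hω
      rwa [div_mul_eq_mul_div, lt_div_iff₀ hP_s, mul_comm] at this
    rw [show (2 : ℝ) ^ (2 * r) = 1 + γ by rw [hγ]; ring]
    exact add_sq_sub_sq_lt_of_lt_Psi (by positivity) (by positivity) hγ0 hC2 (hψ ▸ hlt)
  have hN := measureReal_mul_add_one_le_of_gammaLaw hindep hg_sr hg_rr hm_sr hm_rr hθ_sr hθ_rr
    hlaw_sr hlaw_rr (div_nonneg hψ0 hP_s.le) hP_r.le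
  rw [div_div, ← neg_div, ← mul_div_assoc] at hN
  calc μ.real {ω | _} ≥ μ.real Nᶜ :=
        ENNReal.toReal_mono (measure_ne_top μ _) (measure_mono_ae hNc)
    _ = 1 - μ.real N := probReal_compl_eq_one_sub (measurableSet_le (by fun_prop) hg_sr)
    _ = _ := by rw [hN]
end

section
/- Let g_sr and g_rr be independent exponential random variables with means π_sr > 0 and π_rr > 0, respectively. Fix P_s, P_r > 0, C ∈ [0,1], r > 0, set γ = 2^{2r} − 1 and α = P_r·π_rr/(P_r·π_rr + 1). Then the Rayleigh-fading S–R outage probability satisfies P[(P_s·g_sr + P_r·g_rr + 1)² − (P_r·g_rr·C)² < 2^{2r}·((P_r·g_rr + 1)² − (P_r·g_rr·C)²)] ≤ 1 − exp( − ((P_r·π_rr + 1)/(P_s·π_sr)) · Ψ_γ(α·C) ). -/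
/-!
Write `w = P_r g_rr + 1`. Since `g_sr, g_rr ≥ 0`, the outage event is equivalent to
`P_s g_sr < T(g_rr)` with `T(v) = √((1 + γ) w² - γ (P_r v C)²) - w ≥ 0`. Conditioning on
`g_rr`, independence and the exponential CDF give the outage probability
`1 - E[exp(-T(g_rr) / (P_s π_sr))]`.
The radicand is a quadratic in `v` with nonnegative coefficients and nonnegative discriminant, so
`T` is concave, `exp(-T / (P_s π_sr))` is convex, and Jensen's inequality at the mean `π_rr` gives
the bound, because `T(π_rr) = (P_r π_rr + 1) Ψ_γ(α C)`.
-/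

open MeasureTheory ProbabilityTheory Real

/-- The exponential law with mean `π`, given by its density `(1/π) e^(-x/π)` on `[0, ∞)`. -/
noncomputable def expLaw (mean : ℝ) : Measure ℝ :=
  volume.withDensity fun x =>
    ENNReal.ofReal (if 0 ≤ x then (1 / mean) * Real.exp (-x / mean) else 0)

open Set

section ExpLaw

variable {m : ℝ}

lemma expLaw_eq_expMeasure (m : ℝ) : expLaw m = expMeasure m⁻¹ := by
  refine congrArg volume.withDensity (funext fun x => ?_)
  rw [gammaPDF, ← exponentialPDFReal, ← exponentialPDF, exponentialPDF_eq, one_div, neg_div,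
    div_eq_inv_mul]

lemma isProbabilityMeasure_expLaw (hm : 0 < m) : IsProbabilityMeasure (expLaw m) := by
  rw [expLaw_eq_expMeasure]
  exact isProbabilityMeasure_expMeasure (inv_pos.2 hm)

lemma expLaw_Iio (hm : 0 < m) (t : ℝ) :
    expLaw m (Iio t) = ENNReal.ofReal (1 - exp (-(t / m))) := by
  rw [expLaw_eq_expMeasure, expMeasure, gammaMeasure, withDensity_apply _ measurableSet_Iio,
    setLIntegral_congr Iio_ae_eq_Iic]
  change ∫⁻ x in Iic t, exponentialPDF m⁻¹ x = _
  rw [lintegral_exponentialPDF_eq_antiDeriv (inv_pos.2 hm), inv_mul_eq_div]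
  split_ifs with ht
  · rfl
  · rw [ENNReal.ofReal_zero, eq_comm, ENNReal.ofReal_eq_zero, sub_nonpos, one_le_exp_iff,
      neg_nonneg]
    exact div_nonpos_of_nonpos_of_nonneg (not_le.1 ht).le hm.le

lemma ae_nonneg_expLaw (hm : 0 < m) : ∀ᵐ x ∂expLaw m, 0 ≤ x := by
  simp_rw [ae_iff, not_le]
  exact (expLaw_Iio hm 0).trans (by simp)

lemma integral_id_expLaw (hm : 0 < m) : ∫ x, x ∂expLaw m = m := by
  rw [expLaw, integral_withDensity_eq_integral_toReal_smul
    ((Measurable.ite measurableSet_Ici (by fun_prop) measurable_const).ennreal_ofReal)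
    (ae_of_all _ fun _ => ENNReal.ofReal_lt_top)]
  have hdensity : ∀ x, (ENNReal.ofReal (if 0 ≤ x then 1 / m * exp (-x / m) else 0)).toReal • x
      = (Ioi 0).indicator (fun x => m⁻¹ * (x ^ ((2 : ℝ) - 1) * exp (-(m⁻¹ * x)))) x := by
    intro x
    rcases lt_or_ge 0 x with hx | hx
    · rw [indicator_of_mem (mem_Ioi.2 hx), if_pos hx.le, ENNReal.toReal_ofReal (by positivity),
        smul_eq_mul, show (2 : ℝ) - 1 = 1 by norm_num, rpow_one, neg_div, div_eq_inv_mul x]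
      ring
    · rw [indicator_of_notMem (notMem_Ioi.2 hx)]
      rcases hx.lt_or_eq with hx | rfl
      · simp [hx.not_ge]
      · simp
  simp_rw [hdensity, integral_indicator measurableSet_Ioi, integral_const_mul,
    integral_rpow_mul_exp_neg_mul_Ioi two_pos (inv_pos.2 hm), Gamma_two]
  field_simp
  norm_num

lemma integrable_id_expLaw (hm : 0 < m) : Integrable id (expLaw m) :=
  .of_integral_ne_zero (by simp only [id, integral_id_expLaw hm]; exact hm.ne')

lemma measure_lt_comp_eq_integral_of_indepFun {Ω : Type*} [MeasurableSpace Ω] {μ : Measure Ω}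
    [IsProbabilityMeasure μ] {X Y : Ω → ℝ} (hX : Measurable X) (hY : Measurable Y)
    (hXY : IndepFun X Y μ) (hm : 0 < m) (hlaw : μ.map X = expLaw m) {h : ℝ → ℝ}
    (hh : Measurable h) (hh0 : ∀ᵐ y ∂μ.map Y, 0 ≤ h y) :
    (μ {ω | X ω < h (Y ω)}).toReal = ∫ y, (1 - exp (-(h y / m))) ∂μ.map Y := by
  have hS : MeasurableSet {p : ℝ × ℝ | p.1 < h p.2} :=
    measurableSet_lt measurable_fst (hh.comp measurable_snd)
  have hprod : μ {ω | X ω < h (Y ω)} = ((μ.map X).prod (μ.map Y)) {p | p.1 < h p.2} := by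
    rw [← (indepFun_iff_map_prod_eq_prod_map_map hX.aemeasurable hY.aemeasurable).1 hXY,
      Measure.map_apply (hX.prodMk hY) hS]
    rfl
  have hnonneg : ∀ᵐ y ∂μ.map Y, 0 ≤ 1 - exp (-(h y / m)) := by
    filter_upwards [hh0] with y hy
    rw [sub_nonneg, exp_le_one_iff, neg_nonpos]
    positivity
  rw [hprod, Measure.prod_apply_symm hS, hlaw,
    integral_eq_lintegral_of_nonneg_ae hnonneg (by fun_prop)]
  exact congrArg ENNReal.toReal (lintegral_congr fun y => expLaw_Iio hm (h y))

end ExpLaw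

section Jensen

lemma ConcaveOn.convexOn_exp_neg {E : Type*} [AddCommMonoid E] [Module ℝ E] {s : Set E}
    {f : E → ℝ} (hf : ConcaveOn ℝ s f) : ConvexOn ℝ s (fun v => exp (-f v)) := by
  refine ⟨hf.1, fun x hx y hy a b ha hb hab => ?_⟩
  calc exp (-f (a • x + b • y)) ≤ exp (a • -f x + b • -f y) := by
        have := hf.2 hx hy ha hb hab
        simp only [smul_eq_mul] at this ⊢
        exact exp_le_exp.2 (by linarith)
    _ ≤ a • exp (-f x) + b • exp (-f y) := convexOn_exp.2 trivial trivial ha hb hab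

lemma integral_one_sub_exp_neg_div_le {ν : Measure ℝ} [IsProbabilityMeasure ν]
    (hν : ∀ᵐ v ∂ν, 0 ≤ v) (hint : Integrable id ν) {f : ℝ → ℝ} (hf : ConcaveOn ℝ (Ici 0) f)
    (hfc : Continuous f) (hf0 : ∀ v, 0 ≤ v → 0 ≤ f v) {c : ℝ} (hc : 0 < c) :
    ∫ v, (1 - exp (-(f v / c))) ∂ν ≤ 1 - exp (-(f (∫ v, v ∂ν) / c)) := by
  have hconvex : ConvexOn ℝ (Ici 0) (fun v => exp (-(f v / c))) := by
    refine ConcaveOn.convexOn_exp_neg ?_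
    simpa only [smul_eq_mul, div_eq_inv_mul] using hf.smul (inv_nonneg.2 hc.le)
  have hbound : ∀ᵐ v ∂ν, ‖exp (-(f v / c))‖ ≤ 1 := by
    filter_upwards [hν] with v hv
    rw [norm_of_nonneg (exp_nonneg _), exp_le_one_iff, neg_nonpos]
    exact div_nonneg (hf0 v hv) hc.le
  have hintegrable : Integrable (fun v => exp (-(f v / c))) ν :=
    .of_bound (by fun_prop) 1 hbound
  have hjensen :=
    hconvex.map_integral_le (f := id) (by fun_prop) isClosed_Ici hν hint hintegrable
  rw [integral_sub (integrable_const 1) hintegrable, integral_const, probReal_univ, one_smul]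
  simp only [id] at hjensen
  linarith

end Jensen

section OutageThreshold

lemma add_sq_sub_sq_lt_iff {x w z γ : ℝ} (h : 0 ≤ x + w) :
    (x + w) ^ 2 - z ^ 2 < (1 + γ) * (w ^ 2 - z ^ 2) ↔
      x < √((1 + γ) * w ^ 2 - γ * z ^ 2) - w := by
  rw [lt_sub_iff_add_lt, lt_sqrt h]
  constructor <;> intro <;> linarith

lemma concaveOn_sqrt_quadratic {A B D : ℝ} (hA : 0 ≤ A) (hB : 0 ≤ B) (hD : 0 ≤ D)
    (hdisc : 4 * A * D ≤ B ^ 2) :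
    ConcaveOn ℝ (Ici 0) (fun v => √(A * v ^ 2 + B * v + D)) := by
  refine ⟨convex_Ici 0, fun x (hx : 0 ≤ x) y (hy : 0 ≤ y) a b ha hb hab => ?_⟩
  simp only [smul_eq_mul]
  have hqx : 0 ≤ A * x ^ 2 + B * x + D := by positivity
  have hqy : 0 ≤ A * y ^ 2 + B * y + D := by positivity
  -- `E` is the polar form of the quadratic; the discriminant condition is a reverse
  -- Cauchy–Schwarz inequality for it.
  set E := (2 * A * x * y + B * x + B * y + 2 * D) / 2
  have hcross : √(A * x ^ 2 + B * x + D) * √(A * y ^ 2 + B * y + D) ≤ E := by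
    have hlagrange : E ^ 2 - (A * x ^ 2 + B * x + D) * (A * y ^ 2 + B * y + D)
        = (B ^ 2 - 4 * A * D) / 4 * (x - y) ^ 2 := by
      simp only [E]
      ring
    rw [← sqrt_mul hqx, sqrt_le_iff]
    exact ⟨by positivity, by nlinarith [mul_nonneg (sub_nonneg.2 hdisc) (sq_nonneg (x - y))]⟩
  have hpolar : A * (a * x + b * y) ^ 2 + B * (a * x + b * y) + D
      = a ^ 2 * (A * x ^ 2 + B * x + D) + b ^ 2 * (A * y ^ 2 + B * y + D) + 2 * a * b * E := by
    obtain rfl : b = 1 - a := by linarith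
    ring
  refine le_sqrt_of_sq_le ?_
  calc (a * √(A * x ^ 2 + B * x + D) + b * √(A * y ^ 2 + B * y + D)) ^ 2
      = a ^ 2 * (A * x ^ 2 + B * x + D) + b ^ 2 * (A * y ^ 2 + B * y + D)
        + 2 * a * b * (√(A * x ^ 2 + B * x + D) * √(A * y ^ 2 + B * y + D)) := by
        rw [add_sq, mul_pow, mul_pow, sq_sqrt hqx, sq_sqrt hqy]
        ring
    _ ≤ _ := by gcongr
    _ = _ := hpolar.symm

noncomputable def outageThreshold (γ P C v : ℝ) : ℝ :=
  √((1 + γ) * (P * v + 1) ^ 2 - γ * (P * v * C) ^ 2) - (P * v + 1)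

variable {γ P C : ℝ}

lemma outageThreshold_nonneg (hγ : 0 ≤ γ) (hP : 0 ≤ P) (hC : C ^ 2 ≤ 1) {v : ℝ} (hv : 0 ≤ v) :
    0 ≤ outageThreshold γ P C v := by
  have hPv : 0 ≤ P * v := mul_nonneg hP hv
  have : (P * v * C) ^ 2 ≤ (P * v + 1) ^ 2 := by nlinarith [sq_nonneg (P * v)]
  rw [outageThreshold, sub_nonneg]
  exact le_sqrt_of_sq_le (by nlinarith)

lemma concaveOn_outageThreshold (hγ : 0 ≤ γ) (hP : 0 ≤ P) (hC : C ^ 2 ≤ 1) :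
    ConcaveOn ℝ (Ici 0) (outageThreshold γ P C) := by
  have hsqrt := concaveOn_sqrt_quadratic (A := P ^ 2 * (1 + γ - γ * C ^ 2))
    (B := 2 * P * (1 + γ)) (D := 1 + γ) (mul_nonneg (sq_nonneg P) (by nlinarith))
    (by positivity) (by positivity)
    (by nlinarith [mul_nonneg (mul_nonneg (sq_nonneg P) hγ) (sq_nonneg C)])
  have haffine : ConvexOn ℝ (Ici 0) (fun v : ℝ => P * v + 1) :=
    (convexOn_id (convex_Ici 0)).smul hP |>.add_const 1
  have hsplit : outageThreshold γ P C
      = (fun v => √(P ^ 2 * (1 + γ - γ * C ^ 2) * v ^ 2 + 2 * P * (1 + γ) * v + (1 + γ)))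
        - fun v => P * v + 1 := by
    ext v
    simp only [outageThreshold, Pi.sub_apply]
    ring_nf
  rw [hsplit]
  exact hsqrt.sub haffine

lemma lt_outageThreshold_div_iff {P_s u v : ℝ} (hP_s : 0 < P_s) (hP : 0 ≤ P) (hu : 0 ≤ u)
    (hv : 0 ≤ v) :
    u < outageThreshold γ P C v / P_s ↔
      (P_s * u + P * v + 1) ^ 2 - (P * v * C) ^ 2
        < (1 + γ) * ((P * v + 1) ^ 2 - (P * v * C) ^ 2) := by
  rw [lt_div_iff₀' hP_s, outageThreshold, ← add_sq_sub_sq_lt_iff (by positivity), add_assoc]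

lemma continuous_outageThreshold : Continuous (outageThreshold γ P C) := by
  unfold outageThreshold
  fun_prop

lemma outageThreshold_eq_mul_Psi {v : ℝ} (hv : 0 < P * v + 1) :
    outageThreshold γ P C v = (P * v + 1) * Psi γ (P * v / (P * v + 1) * C) := by
  have : (1 + γ) * (P * v + 1) ^ 2 - γ * (P * v * C) ^ 2
      = (P * v + 1) ^ 2 * (1 + γ * (1 - (P * v / (P * v + 1) * C) ^ 2)) := by
    field_simp
    ring
  rw [outageThreshold, Psi, this, sqrt_mul (sq_nonneg _), sqrt_sq hv.le]
  ring

end OutageThreshold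

theorem stmt_3
    {Ω : Type*} [MeasurableSpace Ω] (μ : Measure Ω) [IsProbabilityMeasure μ]
    (g_sr g_rr : Ω → ℝ) (hg_sr : Measurable g_sr) (hg_rr : Measurable g_rr)
    (hindep : IndepFun g_sr g_rr μ)
    (π_sr π_rr : ℝ) (hπ_sr : 0 < π_sr) (hπ_rr : 0 < π_rr)
    (hlaw_sr : μ.map g_sr = expLaw π_sr)
    (hlaw_rr : μ.map g_rr = expLaw π_rr)
    (P_s P_r : ℝ) (hP_s : 0 < P_s) (hP_r : 0 < P_r)
    (C : ℝ) (hC : C ∈ Set.Icc (0 : ℝ) 1)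
    (r : ℝ) (hr : 0 < r)
    (γ α : ℝ) (hγ : γ = (2 : ℝ) ^ (2 * r) - 1)
    (hα : α = P_r * π_rr / (P_r * π_rr + 1)) :
    (μ {ω | (P_s * g_sr ω + P_r * g_rr ω + 1) ^ 2 - (P_r * g_rr ω * C) ^ 2
          < (2 : ℝ) ^ (2 * r) * ((P_r * g_rr ω + 1) ^ 2 - (P_r * g_rr ω * C) ^ 2)}).toReal
      ≤ 1 - Real.exp (-(((P_r * π_rr + 1) / (P_s * π_sr)) * Psi γ (α * C))) := by
  have hγ0 : 0 ≤ γ := hγ ▸ sub_nonneg.2 (one_le_rpow one_le_two (by positivity))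
  have hC2 : C ^ 2 ≤ 1 := by nlinarith [hC.1, hC.2]
  have h2r : (2 : ℝ) ^ (2 * r) = 1 + γ := by rw [hγ]; ring
  have hT0 : ∀ v, 0 ≤ v → 0 ≤ outageThreshold γ P_r C v :=
    fun _ => outageThreshold_nonneg hγ0 hP_r.le hC2
  have : IsProbabilityMeasure (expLaw π_rr) := isProbabilityMeasure_expLaw hπ_rr
  have hjensen := integral_one_sub_exp_neg_div_le (ae_nonneg_expLaw hπ_rr)
    (integrable_id_expLaw hπ_rr) (concaveOn_outageThreshold hγ0 hP_r.le hC2)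
    continuous_outageThreshold hT0 (mul_pos hP_s hπ_sr)
  rw [integral_id_expLaw hπ_rr, outageThreshold_eq_mul_Psi (by positivity), ← hα,
    mul_div_right_comm] at hjensen
  rw [h2r, measure_congr (t := {ω | g_sr ω < outageThreshold γ P_r C (g_rr ω) / P_s}) ?_,
    measure_lt_comp_eq_integral_of_indepFun hg_sr hg_rr hindep hπ_sr hlaw_sr
      (continuous_outageThreshold.measurable.div_const _) ?_, hlaw_rr]
  · simpa only [div_div] using hjensen
  · filter_upwards [hlaw_rr ▸ ae_nonneg_expLaw hπ_rr] with v hv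
    exact div_nonneg (hT0 v hv) hP_s.le
  · filter_upwards [ae_of_ae_map hg_sr.aemeasurable (hlaw_sr ▸ ae_nonneg_expLaw hπ_sr),
      ae_of_ae_map hg_rr.aemeasurable (hlaw_rr ▸ ae_nonneg_expLaw hπ_rr)] with ω hu hv
    exact propext (lt_outageThreshold_div_iff hP_s hP_r.le hu hv).symm
end

section
/- Fix a, b, c, d > 0. Then the function f(x) = 1 − c · exp( −( a/x + b·x ) ) / ( d/x + 1 ) is quasiconvex on (0, ∞); that is, for every real t the sublevel set { x ∈ (0,∞) : f(x) ≤ t } is convex (equivalently, the function x ↦ exp(−(a/x + b·x))/(d/x + 1) is increasing up to a unique point and decreasing thereafter, or monotone). -/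
/-!
Write the function as `1 - exp (h x)` with
`h x = log c - a / x - b * x + (log x - log (x + d))`. Each summand of `h` is concave on `(0, ∞)`
(for the last one, its derivative `d / (x * (x + d))` is decreasing), so `h` is concave and its
superlevel sets are intervals. Composing with the increasing `exp` and the decreasing `y ↦ 1 - y`
turns these into the sublevel sets of the function.
-/

open Real Set

theorem QuasiconvexOn.congr {𝕜 E β : Type*} [Semiring 𝕜] [PartialOrder 𝕜] [AddCommMonoid E]
    [SMul 𝕜 E] [LE β] {s : Set E} {f g : E → β} (hf : QuasiconvexOn 𝕜 s f) (hfg : EqOn f g s) :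
    QuasiconvexOn 𝕜 s g := fun r => by
  have hset : {x ∈ s | f x ≤ r} = {x ∈ s | g x ≤ r} := sep_ext_iff.mpr fun x hx => by rw [hfg hx]
  exact hset ▸ hf r

theorem convexOn_const_div_Ioi {a : ℝ} (ha : 0 ≤ a) : ConvexOn ℝ (Ioi 0) fun x : ℝ => a / x :=
  ((convexOn_zpow (-1)).smul ha).congr fun x _ => by
    simp only [zpow_neg_one, smul_eq_mul, div_eq_mul_inv]

theorem hasDerivAt_log_sub_log_add {d x : ℝ} (hx : 0 < x) (hd : 0 ≤ d) :
    HasDerivAt (fun y => log y - log (y + d)) (d / (x * (x + d))) x := by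
  have hxd : 0 < x + d := by linarith
  refine ((hasDerivAt_log hx.ne').sub
    (((hasDerivAt_id x).add_const d).log hxd.ne')).congr_deriv ?_
  rw [id]
  field_simp
  ring

theorem concaveOn_log_sub_log_add {d : ℝ} (hd : 0 ≤ d) :
    ConcaveOn ℝ (Ioi 0) fun x => log x - log (x + d) := by
  have hderiv : ∀ x ∈ Ioi (0 : ℝ), deriv (fun y => log y - log (y + d)) x = d / (x * (x + d)) :=
    fun x hx => (hasDerivAt_log_sub_log_add hx hd).deriv
  have hdiff : DifferentiableOn ℝ (fun y => log y - log (y + d)) (Ioi 0) := fun x hx =>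
    (hasDerivAt_log_sub_log_add hx hd).differentiableAt.differentiableWithinAt
  have hanti : AntitoneOn (deriv fun y => log y - log (y + d)) (Ioi 0) := by
    intro x hx y hy hxy
    rw [hderiv x hx, hderiv y hy]
    have hx : 0 < x := hx
    exact div_le_div_of_nonneg_left hd (by positivity) (by nlinarith)
  exact AntitoneOn.concaveOn_of_deriv (convex_Ioi 0) hdiff.continuousOn
    (by rwa [interior_Ioi]) (by rwa [interior_Ioi])

theorem mul_exp_div_eq_exp_log_sub {a b c d x : ℝ} (hc : 0 < c) (hd : 0 ≤ d) (hx : 0 < x) :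
    c * exp (-(a / x + b * x)) / (d / x + 1)
      = exp (log c - a / x - b * x + (log x - log (x + d))) := by
  have hxd : 0 < x + d := by linarith
  rw [exp_add, exp_sub, exp_sub, exp_sub, exp_log hc, exp_log hx, exp_log hxd, exp_neg,
    exp_add]
  field_simp
  ring

theorem stmt_17_general
    (a b c d : ℝ) (ha : 0 < a) (hc : 0 < c) (hd : 0 < d) :
    QuasiconvexOn ℝ (Set.Ioi (0 : ℝ))
      (fun x => 1 - c * Real.exp (-(a / x + b * x)) / (d / x + 1)) := by
  have hconcave : ConcaveOn ℝ (Ioi 0)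
      fun x => log c - a / x - b * x + (log x - log (x + d)) :=
    (((concaveOn_const (log c) (convex_Ioi 0)).sub (convexOn_const_div_Ioi ha.le)).sub
      ((LinearMap.mul ℝ ℝ b).convexOn (convex_Ioi 0))).add (concaveOn_log_sub_log_add hd.le)
  have hquasi := (hconcave.quasiconcaveOn.monotone_comp exp_monotone).antitone_comp
    (g := fun y => 1 - y) fun _ _ h => by linarith
  exact hquasi.congr fun x hx => by
    simp only [Function.comp_apply, mul_exp_div_eq_exp_log_sub hc hd.le hx]

theorem stmt_17
    (a b c d : ℝ) (ha : 0 < a) (hb : 0 < b) (hc : 0 < c) (hd : 0 < d) :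
    QuasiconvexOn ℝ (Set.Ioi (0 : ℝ))
      (fun x => 1 - c * Real.exp (-(a / x + b * x)) / (d / x + 1)) :=
  stmt_17_general a b c d ha hc hd
end
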